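/- Let d1 : ℤ^13 → ℤ^13 be the integer matrix given in Table 2 of the paper (the differential d^1_{1,0} of the modified Bredon complex for PSL₂(O_{ℚ(√-5)})). Then the Smith normal form of d1 is diag(0,0,0,0,0,2,1,1,1,1,1,1,1); in particular d1 has rank 8, its cokernel is isomorphic to ℤ^5 ⊕ ℤ/2, and the elementary divisor 2 occurs with multiplicity one. -/

import Mathlib

/-- The matrix of Table 2: the differential `d¹_{1,0}` of the modified Bredon
complex for `PSL₂(O_{ℚ(√-5)})`. -/
def d1Bredon : Matrix (Fin 13) (Fin 13) ℤ :=
  !![-1,0,0,0,0,0,0,1,0,1,0,0,0;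
     0,-1,0,0,0,0,0,0,1,1,0,0,0;
     -1,0,0,0,0,0,0,0,1,0,1,0,0;
     0,-1,0,0,0,0,0,1,0,0,1,0,0;
     0,0,0,0,0,1,0,-1,0,-1,0,0,0;
     0,0,0,0,0,0,1,0,-1,-1,0,0,0;
     0,0,0,0,0,0,1,-1,0,0,-1,0,0;
     0,0,0,0,0,1,0,0,-1,0,-1,0,0;
     1,0,0,0,0,-1,0,0,0,0,0,-1,-1;
     0,1,0,0,0,0,-1,0,0,0,0,-1,-1;
     0,0,0,0,0,0,0,0,0,0,0,1,0;
     0,0,0,0,0,0,0,0,0,0,0,1,0;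
     0,0,0,0,0,0,0,0,0,0,0,1,0]

/-!
A machine-computed pair of unimodular matrices `P`, `Q` brings `d1Bredon` to the diagonal form
`P * d1Bredon * Q = diag(0,0,0,0,0,2,1,…,1)`; unimodularity is certified by explicit integer
inverses. Rank and cokernel are invariant under unimodular changes of basis, and for a diagonal
integer matrix the rank counts the non-zero entries while the cokernel is `⨁ ℤ/dᵢ`, here
`ℤ⁵ ⊕ ℤ/2`.
-/

namespace Matrix

variable {m n R : Type*} [Fintype m] [Fintype n] [DecidableEq m] [DecidableEq n]

theorem mem_range_toLin'_diagonal_iff [CommSemiring R] {d x : m → R} :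
    x ∈ LinearMap.range (toLin' (diagonal d)) ↔ ∀ i, d i ∣ x i := by
  simp only [LinearMap.mem_range, toLin'_apply, mulVec_diagonal, funext_iff]
  constructor
  · rintro ⟨y, hy⟩ i
    exact ⟨y i, (hy i).symm⟩
  · intro h
    choose y hy using h
    exact ⟨y, fun i => (hy i).symm⟩

/-- Over a domain, `diagonal w` restricted to the coordinates in the support of `w` is injective
and has the same range. -/
theorem rank_diagonal_eq_card_ne_zero [CommRing R] [IsDomain R] [DecidableEq R] (w : m → R) :
    (diagonal w).rank = Fintype.card {i // w i ≠ 0} := by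
  let g := (diagonal w).mulVecLin ∘ₗ
    Function.ExtendByZero.linearMap R (Subtype.val : {i // w i ≠ 0} → m)
  have hg_apply (y : {i // w i ≠ 0} → R) (s : {i // w i ≠ 0}) : g y s = w s * y s := by
    simp [g, mulVec_diagonal]
  have hg : Function.Injective g := by
    refine (injective_iff_map_eq_zero g).mpr fun y hy => funext fun s => ?_
    have hs := hg_apply y s
    rw [hy] at hs
    exact (mul_eq_zero.mp hs.symm).resolve_left s.2
  have hrange : LinearMap.range g = LinearMap.range (diagonal w).mulVecLin := by
    refine le_antisymm (LinearMap.range_comp_le_range _ _) ?_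
    rintro _ ⟨x, rfl⟩
    refine ⟨fun s => x s, funext fun i => ?_⟩
    by_cases hi : w i = 0
    · simp [g, mulVec_diagonal, hi]
    · exact (hg_apply _ ⟨i, hi⟩).trans (by simp [mulVec_diagonal])
  rw [rank, ← hrange, LinearMap.finrank_range_of_inj hg, Module.finrank_fintype_fun_eq_card]

noncomputable def cokernelEquivOfIsUnitDet [CommRing R] {A D : Matrix m n R} {P : Matrix m m R}
    {Q : Matrix n n R} (hP : IsUnit P.det) (hQ : IsUnit Q.det) (h : P * A * Q = D) :
    ((m → R) ⧸ LinearMap.range (toLin' A)) ≃ₗ[R] ((m → R) ⧸ LinearMap.range (toLin' D)) :=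
  Submodule.Quotient.equiv _ _ (P.toLinearEquiv' (P.invertibleOfIsUnitDet hP)) <| by
    have hQ_top : LinearMap.range (toLin' Q) = ⊤ :=
      (Q.toLinearEquiv' (Q.invertibleOfIsUnitDet hQ)).range
    rw [← h, toLin'_mul, toLin'_mul, LinearMap.range_comp_of_range_eq_top _ hQ_top,
      LinearMap.range_comp]
    rfl

end Matrix

open Matrix

def d1ElementaryDivisors : Fin 13 → ℤ := ![0,0,0,0,0,2,1,1,1,1,1,1,1]

def d1SnfLeft : Matrix (Fin 13) (Fin 13) ℤ :=
  !![-1,0,1,0,-1,0,0,1,0,0,0,0,0;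
     -1,1,0,0,-1,1,0,0,-1,1,0,0,0;
     0,-1,0,1,0,-1,1,0,0,0,0,0,0;
     0,0,0,0,0,0,0,0,0,0,-1,1,0;
     0,0,0,0,0,0,0,0,0,0,-1,0,1;
     1,1,-1,-1,0,0,0,0,0,0,0,0,0;
     -1,0,0,0,0,0,0,0,0,0,0,0,0;
     0,-1,0,0,0,0,0,0,0,0,0,0,0;
     1,0,-1,0,0,0,0,0,0,0,0,0,0;
     1,0,-1,0,1,0,0,0,0,0,0,0,0;
     0,0,0,0,0,1,0,0,0,0,0,0,0;
     -1,0,0,0,-1,0,0,0,-1,0,0,0,0;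
     -1,0,0,0,-1,0,0,0,-1,0,-1,0,0]

def d1SnfLeftInv : Matrix (Fin 13) (Fin 13) ℤ :=
  !![0,0,0,0,0,0,-1,0,0,0,0,0,0;
     0,0,0,0,0,0,0,-1,0,0,0,0,0;
     0,0,0,0,0,0,-1,0,-1,0,0,0,0;
     0,0,0,0,0,-1,0,-1,1,0,0,0,0;
     0,0,0,0,0,0,0,0,-1,1,0,0,0;
     0,0,0,0,0,0,0,0,0,0,1,0,0;
     0,0,1,0,0,1,0,0,-1,0,1,0,0;
     1,0,0,0,0,0,0,0,0,1,0,0,0;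
     0,0,0,0,0,0,1,0,1,-1,0,-1,0;
     0,1,0,0,0,0,0,1,0,0,-1,-1,0;
     0,0,0,0,0,0,0,0,0,0,0,1,-1;
     0,0,0,1,0,0,0,0,0,0,0,1,-1;
     0,0,0,0,1,0,0,0,0,0,0,1,-1]

def d1SnfRight : Matrix (Fin 13) (Fin 13) ℤ :=
  !![1,0,1,0,0,0,1,0,1,0,0,0,0;
     1,0,1,0,0,1,0,1,0,0,0,0,0;
     0,1,0,0,0,0,0,0,0,0,0,0,0;
     0,0,0,1,0,0,0,0,0,0,0,0,0;
     0,0,0,0,1,0,0,0,0,0,0,0,0;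
     1,0,1,0,0,0,0,0,0,1,0,0,0;
     1,0,1,0,0,1,0,0,0,0,1,0,0;
     1,0,0,0,0,-1,0,0,1,0,0,0,0;
     1,0,0,0,0,0,0,0,0,0,0,0,0;
     0,0,1,0,0,1,0,0,0,0,0,0,0;
     0,0,1,0,0,0,0,0,0,0,0,0,0;
     0,0,0,0,0,0,0,0,0,0,0,1,-1;
     0,0,0,0,0,0,0,0,0,0,0,0,1]

def d1SnfRightInv : Matrix (Fin 13) (Fin 13) ℤ :=
  !![0,0,0,0,0,0,0,0,1,0,0,0,0;
     0,0,1,0,0,0,0,0,0,0,0,0,0;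
     0,0,0,0,0,0,0,0,0,0,1,0,0;
     0,0,0,1,0,0,0,0,0,0,0,0,0;
     0,0,0,0,1,0,0,0,0,0,0,0,0;
     0,0,0,0,0,0,0,0,0,1,-1,0,0;
     1,0,0,0,0,0,0,-1,0,-1,0,0,0;
     0,1,0,0,0,0,0,0,-1,-1,0,0,0;
     0,0,0,0,0,0,0,1,-1,1,-1,0,0;
     0,0,0,0,0,1,0,0,-1,0,-1,0,0;
     0,0,0,0,0,0,1,0,-1,-1,0,0,0;
     0,0,0,0,0,0,0,0,0,0,0,1,1;
     0,0,0,0,0,0,0,0,0,0,0,0,1]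

theorem d1SnfLeft_mul_inv : d1SnfLeft * d1SnfLeftInv = 1 := by decide

theorem d1SnfRight_mul_inv : d1SnfRight * d1SnfRightInv = 1 := by decide

theorem d1SnfLeft_mul_d1Bredon_mul_d1SnfRight :
    d1SnfLeft * d1Bredon * d1SnfRight = diagonal d1ElementaryDivisors := by decide

def d1CokernelCoords : (Fin 13 → ℤ) →ₗ[ℤ] (Fin 5 → ℤ) × ZMod 2 :=
  (LinearMap.funLeft ℤ ℤ (Fin.castAdd 8)).prod
    ((Int.castAddHom (ZMod 2)).toIntLinearMap ∘ₗ LinearMap.proj 5)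

theorem ker_d1CokernelCoords :
    LinearMap.ker d1CokernelCoords = LinearMap.range (toLin' (diagonal d1ElementaryDivisors)) := by
  ext x
  rw [mem_range_toLin'_diagonal_iff]
  simp [d1CokernelCoords, d1ElementaryDivisors, Fin.forall_fin_succ, funext_iff,
    ZMod.intCast_zmod_eq_zero_iff_dvd, and_assoc]

theorem d1CokernelCoords_surjective : Function.Surjective d1CokernelCoords := by
  rintro ⟨a, b⟩
  refine ⟨Fin.append a (Pi.single 0 (b.cast : ℤ) : Fin 8 → ℤ),
    Prod.ext (funext fun j => Fin.append_left _ _ j) ?_⟩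
  have h5 : Fin.append a (Pi.single 0 (b.cast : ℤ) : Fin 8 → ℤ) 5 = b.cast :=
    (Fin.append_right a _ 0).trans (Pi.single_eq_same _ _)
  simp [d1CokernelCoords, h5]

noncomputable def cokernelDiagonalD1ElementaryDivisorsEquiv :
    ((Fin 13 → ℤ) ⧸ LinearMap.range (toLin' (diagonal d1ElementaryDivisors))) ≃ₗ[ℤ]
      (Fin 5 → ℤ) × ZMod 2 :=
  (Submodule.quotEquivOfEq _ _ ker_d1CokernelCoords.symm).trans
    (d1CokernelCoords.quotKerEquivOfSurjective d1CokernelCoords_surjective)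

/-- The Smith normal form of `d1Bredon` is `diag(0,0,0,0,0,2,1,1,1,1,1,1,1)`;
in particular its rank is `8` and its cokernel is `ℤ⁵ ⊕ ℤ/2`. -/
theorem smith_normal_form_d1 :
    (∃ P Q : Matrix (Fin 13) (Fin 13) ℤ, IsUnit P.det ∧ IsUnit Q.det ∧
      P * d1Bredon * Q = Matrix.diagonal ![0,0,0,0,0,2,1,1,1,1,1,1,1]) ∧
    d1Bredon.rank = 8 ∧
    Nonempty (((Fin 13 → ℤ) ⧸ LinearMap.range (Matrix.toLin' d1Bredon)) ≃+
      ((Fin 5 → ℤ) × ZMod 2)) := by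
  have hP : IsUnit d1SnfLeft.det := isUnit_det_of_right_inverse d1SnfLeft_mul_inv
  have hQ : IsUnit d1SnfRight.det := isUnit_det_of_right_inverse d1SnfRight_mul_inv
  have hsnf := d1SnfLeft_mul_d1Bredon_mul_d1SnfRight
  refine ⟨⟨_, _, hP, hQ, hsnf⟩, ?_, ?_⟩
  · rw [← rank_mul_eq_right_of_isUnit_det _ _ hP, ← rank_mul_eq_left_of_isUnit_det _ _ hQ, hsnf,
      rank_diagonal_eq_card_ne_zero]
    decide
  · exact ⟨((cokernelEquivOfIsUnitDet hP hQ hsnf).trans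
      cokernelDiagonalD1ElementaryDivisorsEquiv).toAddEquiv⟩
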